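/- arXiv:math/9709205 — 2 statements merged into one kernel-verified Lean document; each statement's English description precedes it below -/
import Mathlib

section
/- Under the standing setup: there exist β* < θ₁⁺ and i* < θ such that, letting h = h_{i*}^{β*}, for every club E of λ⁺ there are stationarily many δ ∈ S₁ ∩ S₂ such that e_δ ⊆ E and the set {ζ ≤ β* : E ∩ δ ∩ h⁻¹({ζ}) ∩ S' is stationary in δ} has cardinality at least θ₁. -/
noncomputable section

/-- The order type of a set of ordinals (meaningful when `C` is small, i.e. bounded). -/
noncomputable def otp (C : Set Ordinal.{0}) : Ordinal.{0} := by
  classical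
  exact if h : Small.{0} C then
    letI := h
    haveI : IsWellOrder (Shrink C)
        (fun x y => ((equivShrink C).symm x : Ordinal) < ((equivShrink C).symm y : Ordinal)) :=
      RelEmbedding.isWellOrder
        (⟨⟨fun x => ((equivShrink C).symm x : Ordinal),
            fun a b hab => (equivShrink C).symm.injective (Subtype.coe_injective hab)⟩,
          Iff.rfl⟩ :
          (fun x y : Shrink C =>
              ((equivShrink C).symm x : Ordinal) < ((equivShrink C).symm y : Ordinal)) ↪r
            ((· < ·) : Ordinal → Ordinal → Prop))
    Ordinal.type
      (fun x y : Shrink C =>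
        ((equivShrink C).symm x : Ordinal) < ((equivShrink C).symm y : Ordinal))
  else 0

/-- `C` is closed in `δ`: any supremum of a nonempty subset of `C` that is `< δ` lies in `C`. -/
def IsClosedIn (C : Set Ordinal.{0}) (δ : Ordinal.{0}) : Prop :=
  ∀ s ⊆ C, s.Nonempty → sSup s < δ → sSup s ∈ C

/-- `C` is a club (closed unbounded) subset of `δ`. -/
def IsClubIn (C : Set Ordinal.{0}) (δ : Ordinal.{0}) : Prop :=
  C ⊆ Set.Iio δ ∧ (∀ β < δ, ∃ γ ∈ C, β ≤ γ) ∧ IsClosedIn C δ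

/-- `S` is stationary in `δ`: it meets every club of `δ`. -/
def IsStationaryIn (S : Set Ordinal.{0}) (δ : Ordinal.{0}) : Prop :=
  ∀ C, IsClubIn C δ → (S ∩ C).Nonempty

/-- The accumulation points of `C` that belong to `C`. -/
def accSet (C : Set Ordinal.{0}) : Set Ordinal.{0} :=
  {β ∈ C | β = sSup (C ∩ Set.Iio β)}

/-- The non-accumulation points of `C`. -/
def naccSet (C : Set Ordinal.{0}) : Set Ordinal.{0} := C \ accSet C

/-- `S_κ^δ`: the set of ordinals below `δ` of cofinality `κ`. -/
def cofSet (κ : Cardinal.{0}) (δ : Ordinal.{0}) : Set Ordinal.{0} :=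
  {α | α < δ ∧ α.cof = κ}

/-!
Suppose no pair `(β*, i*)` works. There are only `θ₁⁺ · θ < λ⁺` pairs, so the clubs witnessing
the failures intersect to a single club `E*`, and club guessing yields `δ ∈ S₁ ∩ S₂ ∩ E*` with
`e_δ ⊆ E*`. Below `δ` the set `T = S' ∩ e_δ` is stationary, and for `α ∈ T` every `ξ_{α,i}` lies
in `e_α = e_δ ∩ α`. As the initial segments of `e_δ` have size `≤ θ₁ < cf δ`, Fodor's lemma along
`e_δ` applies: above every `b < δ` some `ξ_{·,i}` has a stationary fibre. If for each `i` fewer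
than `θ₁` points had a stationary fibre, these `θ · θ₁ < cf δ` points would be bounded below `δ`;
so for one `i` there are `θ₁` points of `e_δ` with stationary fibre. Their heights
`otp (e_δ ∩ x)` are distinct and bounded by some `β* < θ₁⁺`, so `(β*, i)` works at `δ` for every
club containing `e_δ`, in particular for the one that excluded `δ`.
-/

open Set Cardinal
open scoped Ordinal

section Basic

variable {δ : Ordinal.{0}}

theorem isClubIn_Iio : IsClubIn (Iio δ) δ :=
  ⟨subset_rfl, fun β hβ => ⟨β, hβ, le_rfl⟩, fun _ _ _ hlt => hlt⟩

theorem isClubIn_Ioo (hδ : Order.IsSuccLimit δ) {b : Ordinal.{0}} (hb : b < δ) :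
    IsClubIn (Ioo b δ) δ := by
  refine ⟨fun γ hγ => hγ.2, fun β hβ => ?_, fun s hs ⟨x, hx⟩ hlt => ⟨?_, hlt⟩⟩
  · exact ⟨max (Order.succ b) β, ⟨(Order.lt_succ b).trans_le (le_max_left _ _),
      max_lt (hδ.succ_lt hb) hβ⟩, le_max_right _ _⟩
  · exact (hs hx).1.trans_le (le_csSup ⟨δ, fun y hy => (hs hy).2.le⟩ hx)

theorem isClubIn_of_csSup_eq {C : Set Ordinal.{0}} (hCδ : C ⊆ Iio δ) (hC : IsClosedIn C δ)
    (hsup : sSup C = δ) : IsClubIn C δ := by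
  refine ⟨hCδ, fun β hβ => ?_, hC⟩
  obtain ⟨γ, hγ, hβγ⟩ := exists_lt_of_lt_csSup' (hsup ▸ hβ)
  exact ⟨γ, hγ, hβγ.le⟩

theorem IsStationaryIn.mono {S S' : Set Ordinal.{0}} (hS : IsStationaryIn S δ) (h : S ⊆ S') :
    IsStationaryIn S' δ :=
  fun C hC => (hS C hC).mono (inter_subset_inter_left C h)

theorem IsStationaryIn.nonempty {S : Set Ordinal.{0}} (hS : IsStationaryIn S δ) : S.Nonempty :=
  (hS _ isClubIn_Iio).mono inter_subset_left

theorem not_isStationaryIn_iff {S : Set Ordinal.{0}} :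
    ¬ IsStationaryIn S δ ↔ ∃ C, IsClubIn C δ ∧ S ∩ C = ∅ := by
  simp only [IsStationaryIn, not_forall, not_nonempty_iff_eq_empty, exists_prop]

end Basic

section Transfer

/- Clubs and stationary sets of `δ` are those of the well-order `Iio δ` in the sense of
`IsClub` / `IsStationary`; this gives access to `IsClub.iInter` and `isStationary_iUnion_iff`. -/

variable {δ : Ordinal.{0}}

theorem isLUB_image_val_iff {d : Set (Iio δ)} {a : Iio δ} :
    IsLUB (Subtype.val '' d) a.1 ↔ IsLUB d a := by
  refine ⟨fun h => ⟨fun b hb => h.1 (mem_image_of_mem _ hb), fun b hb => h.2 ?_⟩,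
    fun h => ⟨?_, fun b hb => ?_⟩⟩
  · rintro _ ⟨c, hc, rfl⟩
    exact hb hc
  · rintro _ ⟨c, hc, rfl⟩
    exact h.1 hc
  · rcases lt_or_ge b δ with hbδ | hbδ
    · exact h.2 (show (⟨b, hbδ⟩ : Iio δ) ∈ upperBounds d from
        fun c hc => hb (mem_image_of_mem _ hc))
    · exact a.2.le.trans hbδ

theorem isClubIn_iff_isClub {C : Set Ordinal.{0}} :
    IsClubIn C δ ↔ C ⊆ Iio δ ∧ IsClub (Subtype.val ⁻¹' C : Set (Iio δ)) := by
  constructor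
  · rintro ⟨hCδ, hcof, hcl⟩
    refine ⟨hCδ, fun d hd hne _ a ha => ?_, fun b => ?_⟩
    · have hsup : sSup (Subtype.val '' d) = a :=
        (isLUB_image_val_iff.2 ha).csSup_eq (hne.image _)
      simpa [hsup] using hcl _ (image_subset_iff.2 hd) (hne.image _) (hsup ▸ a.2)
    · obtain ⟨γ, hγ, hbγ⟩ := hcof b b.2
      exact ⟨⟨γ, hCδ hγ⟩, hγ, hbγ⟩
  · rintro ⟨hCδ, hcl, hcof⟩
    refine ⟨hCδ, fun β hβ => ?_, fun s hs hne hlt => ?_⟩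
    · obtain ⟨γ, hγ, hβγ⟩ := hcof ⟨β, hβ⟩
      exact ⟨γ, hγ, hβγ⟩
    · have hd : Subtype.val '' (Subtype.val ⁻¹' s : Set (Iio δ)) = s := by
        simpa using hs.trans hCδ
      have hlub : IsLUB (Subtype.val '' (Subtype.val ⁻¹' s : Set (Iio δ)))
          (⟨sSup s, hlt⟩ : Iio δ).1 := by
        rw [hd]
        exact isLUB_csSup hne ⟨δ, fun y hy => (hCδ (hs hy)).le⟩
      refine hcl (fun x hx => hs hx) ?_ (.of_linearOrder _) (isLUB_image_val_iff.1 hlub)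
      rw [← hd] at hne
      exact hne.of_image

theorem isStationaryIn_iff_isStationary {S : Set Ordinal.{0}} :
    IsStationaryIn S δ ↔ IsStationary (Subtype.val ⁻¹' S : Set (Iio δ)) := by
  refine ⟨fun hS t ht => ?_, fun hS C hC => ?_⟩
  · have hC : IsClubIn (Subtype.val '' t) δ := isClubIn_iff_isClub.2
      ⟨by rintro _ ⟨x, -, rfl⟩; exact x.2, by rwa [preimage_image_eq _ Subtype.val_injective]⟩
    obtain ⟨_, hxS, x, hxt, rfl⟩ := hS _ hC
    exact ⟨x, hxS, hxt⟩
  · obtain ⟨x, hxS, hxC⟩ := hS (isClubIn_iff_isClub.1 hC).2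
    exact ⟨x, hxS, hxC⟩

theorem IsClubIn.isClub {C : Set Ordinal.{0}} (hC : IsClubIn C δ) :
    IsClub (Subtype.val ⁻¹' C : Set (Iio δ)) :=
  (isClubIn_iff_isClub.1 hC).2

theorem cof_Iio_eq_lift : Order.cof (Iio δ) = lift.{1} δ.cof := by
  rw [Ordinal.cof_Iio, Ordinal.lift_cof]

theorem cof_Iio_ne_aleph0 (hδ : δ.cof ≠ ℵ₀) : Order.cof (Iio δ) ≠ ℵ₀ := by
  rwa [cof_Iio_eq_lift, Ne, lift_eq_aleph0]

theorem IsClubIn.exists_forall_mem {ι : Type 1} {C : ι → Set Ordinal.{0}} (hδ : δ.cof ≠ ℵ₀)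
    (hι : #ι < lift.{1} δ.cof) (hC : ∀ i, IsClubIn (C i) δ) {β : Ordinal} (hβ : β < δ) :
    ∃ γ, β ≤ γ ∧ γ < δ ∧ ∀ i, γ ∈ C i := by
  have hclub := IsClub.iInter (f := fun i => (Subtype.val ⁻¹' C i : Set (Iio δ)))
    (cof_Iio_ne_aleph0 hδ) (by simpa [cof_Iio_eq_lift] using hι) (fun i => (hC i).isClub)
  obtain ⟨γ, hγ, hβγ⟩ := hclub.isCofinal ⟨β, hβ⟩
  exact ⟨γ, hβγ, γ.2, fun i => mem_iInter.1 hγ i⟩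

theorem IsClubIn.iInter {ι : Type 1} [Nonempty ι] {C : ι → Set Ordinal.{0}} (hδ : δ.cof ≠ ℵ₀)
    (hι : #ι < lift.{1} δ.cof) (hC : ∀ i, IsClubIn (C i) δ) : IsClubIn (⋂ i, C i) δ := by
  refine isClubIn_iff_isClub.2 ⟨(iInter_subset _ (Classical.arbitrary ι)).trans (hC _).1, ?_⟩
  rw [preimage_iInter]
  exact IsClub.iInter (cof_Iio_ne_aleph0 hδ)
    (by simpa [cof_Iio_eq_lift] using hι) (fun i => (hC i).isClub)

theorem IsClubIn.inter {C D : Set Ordinal.{0}} (hδ : δ.cof ≠ ℵ₀) (hC : IsClubIn C δ)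
    (hD : IsClubIn D δ) : IsClubIn (C ∩ D) δ := by
  refine isClubIn_iff_isClub.2 ⟨inter_subset_left.trans hC.1, ?_⟩
  rw [preimage_inter]
  exact hC.isClub.inter (cof_Iio_ne_aleph0 hδ) hD.isClub

theorem IsStationaryIn.inter_isClubIn {S C : Set Ordinal.{0}} (hδ : δ.cof ≠ ℵ₀)
    (hS : IsStationaryIn S δ) (hC : IsClubIn C δ) : IsStationaryIn (S ∩ C) δ := by
  intro D hD
  obtain ⟨x, hxS, hxCD⟩ := hS (C ∩ D) (.inter hδ hC hD)
  exact ⟨x, ⟨hxS, hxCD.1⟩, hxCD.2⟩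

theorem IsStationaryIn.exists_of_iUnion {ι : Type 1} {S : ι → Set Ordinal.{0}}
    (hδ : δ.cof ≠ ℵ₀) (hι : #ι < lift.{1} δ.cof) (hS : IsStationaryIn (⋃ i, S i) δ) :
    ∃ i, IsStationaryIn (S i) δ := by
  simp_rw [isStationaryIn_iff_isStationary, preimage_iUnion] at hS ⊢
  exact (isStationary_iUnion_iff (cof_Iio_ne_aleph0 hδ)
    (by simpa [cof_Iio_eq_lift] using hι)).1 hS

end Transfer

section Fodor

variable {δ : Ordinal.{0}}

theorem IsClosedIn.csSup_mem {D s : Set Ordinal.{0}} (hD : IsClosedIn D δ) (hbdd : BddAbove s)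
    (hlt : sSup s < δ) {x : Ordinal} (hx : x < sSup s) (hsD : ∀ y ∈ s, x < y → y ∈ D) :
    sSup s ∈ D := by
  have hne : s.Nonempty := nonempty_iff_ne_empty.2 (by rintro rfl; simp at hx)
  obtain ⟨b, hbs, hxb⟩ := exists_lt_of_lt_csSup hne hx
  have htail := ((isLUB_csSup hne hbdd).inter_Ici_of_mem hbs).csSup_eq ⟨b, hbs, self_mem_Ici⟩
  rw [← htail] at hlt ⊢
  exact hD _ (fun y hy => hsD y hy.1 (hxb.trans_le hy.2)) ⟨b, hbs, self_mem_Ici⟩ hlt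

theorem isClubIn_diagInter (hδ : ℵ₀ < δ.cof) {e : Set Ordinal.{0}}
    (he : ∀ β < δ, #(e ∩ Iio β : Set Ordinal.{0}) < lift.{1} δ.cof)
    {D : Ordinal.{0} → Set Ordinal.{0}} (hD : ∀ x ∈ e, IsClubIn (D x) δ) :
    IsClubIn {β | β < δ ∧ ∀ x ∈ e, x < β → β ∈ D x} δ := by
  have hlim : Order.IsSuccLimit δ := Ordinal.one_lt_cof_iff.1 (one_lt_aleph0.trans hδ)
  refine ⟨fun β hβ => hβ.1, fun β₀ hβ₀ => ?_, fun s hs _ hlt => ⟨hlt, fun x hx hxs => ?_⟩⟩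
  · have hstep : ∀ β < δ, ∃ γ, β < γ ∧ γ < δ ∧ ∀ x ∈ e, x < β → γ ∈ D x := by
      intro β hβ
      obtain ⟨γ, hβγ, hγδ, hγD⟩ := IsClubIn.exists_forall_mem (ι := ↥(e ∩ Iio β)) hδ.ne'
        (he β hβ) (fun x => hD x x.2.1) (hlim.succ_lt hβ)
      exact ⟨γ, Order.succ_le_iff.1 hβγ, hγδ, fun x hx hxβ => hγD ⟨x, hx, hxβ⟩⟩
    choose! next hnext using hstep
    set g : ℕ → Ordinal.{0} := fun n => next^[n] β₀
    have hgsucc : ∀ n, g (n + 1) = next (g n) := fun n => Function.iterate_succ_apply' _ _ _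
    have hgδ : ∀ n, g n < δ := fun n => by
      induction n with
      | zero => exact hβ₀
      | succ n ih => rw [hgsucc]; exact (hnext _ ih).2.1
    have hmono : StrictMono g :=
      strictMono_nat_of_lt_succ fun n => hgsucc n ▸ (hnext _ (hgδ n)).1
    have hsup : ⨆ n, g n < δ := Ordinal.iSup_lt_of_lt_cof (by rwa [mk_nat]) hgδ
    refine ⟨⨆ n, g n, ⟨hsup, fun x hx hxγ => ?_⟩, Ordinal.le_iSup g 0⟩
    obtain ⟨n, hn⟩ := Ordinal.lt_iSup_iff.1 hxγ
    refine (hD x hx).2.2.csSup_mem Ordinal.bddAbove_of_small hsup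
      (hmono.lt_iff_lt.2 n.lt_succ_self |>.trans_le (Ordinal.le_iSup g _)) ?_
    rintro _ ⟨m, rfl⟩ hm
    have hnm := hmono.lt_iff_lt.1 hm
    obtain ⟨k, rfl⟩ : ∃ k, m = k + 1 := ⟨m - 1, by omega⟩
    show g (k + 1) ∈ D x
    rw [hgsucc]
    exact (hnext _ (hgδ k)).2.2 x hx (hn.trans_le (hmono.monotone (by omega)))
  · exact (hD x hx).2.2.csSup_mem ⟨δ, fun y hy => (hs hy).1.le⟩ hlt hxs
      fun y hy hxy => (hs hy).2 x hx hxy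

theorem IsStationaryIn.exists_isStationaryIn_fiber (hδ : ℵ₀ < δ.cof) {e S : Set Ordinal.{0}}
    (he : ∀ β < δ, #(e ∩ Iio β : Set Ordinal.{0}) < lift.{1} δ.cof) (hS : IsStationaryIn S δ)
    {f : Ordinal.{0} → Ordinal.{0}} (hf : ∀ α ∈ S, f α ∈ e ∧ f α < α) :
    ∃ x ∈ e, IsStationaryIn {α ∈ S | f α = x} δ := by
  by_contra! h
  have hD : ∀ x ∈ e, ∃ D, IsClubIn D δ ∧ {α ∈ S | f α = x} ∩ D = ∅ :=
    fun x hx => not_isStationaryIn_iff.1 (h x hx)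
  choose! D hDclub hDdisj using hD
  obtain ⟨α, hαS, -, hαD⟩ := hS _ (isClubIn_diagInter hδ he hDclub)
  obtain ⟨hfe, hfα⟩ := hf α hαS
  exact (eq_empty_iff_forall_notMem.1 (hDdisj (f α) hfe)) α ⟨⟨hαS, rfl⟩, hαD (f α) hfe hfα⟩

end Fodor

section OrderType

variable {B : Set Ordinal.{0}}

theorem lift_otp (C : Set Ordinal.{0}) [Small.{0} C] : Ordinal.lift.{1} (otp C) = typeLT ↥C := by
  rw [otp, dif_pos ‹_›]
  exact (Ordinal.type_lift_preimage (α := C) (· < ·) (equivShrink C).symm).trans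
    (Ordinal.lift_uzero _)

theorem lift_otp_inter_Iio [Small.{0} B] {x : Ordinal.{0}} (hx : x ∈ B) :
    Ordinal.lift.{1} (otp (B ∩ Iio x)) = Ordinal.typein (α := ↥B) (· < ·) ⟨x, hx⟩ := by
  have : Small.{0} ↥(B ∩ Iio x) := small_subset inter_subset_left
  rw [lift_otp, ← Ordinal.type_Iio_lt]
  exact RelIso.ordinalType_congr
    ⟨⟨fun y => ⟨⟨y.1, y.2.1⟩, y.2.2⟩, fun y => ⟨y.1.1, y.1.2, y.2⟩, fun _ => rfl, fun _ => rfl⟩,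
      Iff.rfl⟩

theorem otp_inter_Iio_lt [Small.{0} B] {x : Ordinal.{0}} (hx : x ∈ B) :
    otp (B ∩ Iio x) < otp B := by
  rw [← Ordinal.lift_lt.{1}, lift_otp_inter_Iio hx, lift_otp]
  exact Ordinal.typein_lt_type _ _

theorem injOn_otp_inter_Iio [Small.{0} B] : InjOn (fun x => otp (B ∩ Iio x)) B := by
  intro x hx y hy hxy
  have := congrArg Ordinal.lift.{1} hxy
  simp only [lift_otp_inter_Iio hx, lift_otp_inter_Iio hy] at this
  exact congrArg Subtype.val ((Ordinal.typein _).injective this)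

theorem mk_inter_Iio_lt [Small.{0} B] {κ : Cardinal.{0}} (hB : otp B ≤ κ.ord) {x : Ordinal.{0}}
    (hx : x ∈ B) : #(B ∩ Iio x : Set Ordinal.{0}) < lift.{1} κ := by
  have : Small.{0} ↥(B ∩ Iio x) := small_subset inter_subset_left
  rw [← Ordinal.card_type (· < ·), ← lift_otp, ← Ordinal.lift_card, lift_lt, ← lt_ord]
  exact (otp_inter_Iio_lt hx).trans_le hB

end OrderType

theorem mk_Iio_ord_prod_lt {κ ν ρ : Cardinal.{0}} (hκ : ℵ₀ ≤ κ) (hνκ : ν ≤ κ) (hκρ : κ < ρ) :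
    #(Iio κ.ord × Iio ν.ord) < lift.{1} ρ := by
  rw [mk_prod, lift_id, lift_id, Cardinal.mk_Iio_ordinal, Cardinal.mk_Iio_ordinal, card_ord,
    card_ord, ← lift_mul, lift_lt]
  exact (mul_le_max_of_aleph0_le_left hκ).trans_lt (max_lt hκρ (hνκ.trans_lt hκρ))

theorem exists_isStationaryIn_fiber_gt {δ : Ordinal.{0}} {θ : Cardinal.{0}} (hδ : ℵ₀ < δ.cof)
    (hθ : θ < δ.cof) {e T : Set Ordinal.{0}}
    (he : ∀ β < δ, #(e ∩ Iio β : Set Ordinal.{0}) < lift.{1} δ.cof) (hT : IsStationaryIn T δ)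
    {ξ : Ordinal.{0} → Ordinal.{0} → Ordinal.{0}} (hξ : ∀ α ∈ T, ∀ i < θ.ord, ξ α i ∈ e ∧ ξ α i < α)
    (hξ_cofinal : ∀ α ∈ T, ∀ b < α, ∃ i < θ.ord, b < ξ α i) {b : Ordinal.{0}} (hb : b < δ) :
    ∃ i < θ.ord, ∃ x ∈ e, b < x ∧ IsStationaryIn {α ∈ T | ξ α i = x} δ := by
  have hlim : Order.IsSuccLimit δ := Ordinal.one_lt_cof_iff.1 (one_lt_aleph0.trans hδ)
  have hU : IsStationaryIn (⋃ i : Iio θ.ord, {α ∈ T | b < ξ α i}) δ := by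
    refine (hT.inter_isClubIn hδ.ne' (isClubIn_Ioo hlim hb)).mono ?_
    rintro α ⟨hαT, hbα, -⟩
    obtain ⟨i, hi, hbi⟩ := hξ_cofinal α hαT b hbα
    exact mem_iUnion.2 ⟨⟨i, hi⟩, hαT, hbi⟩
  obtain ⟨⟨i, hi⟩, hUi⟩ := hU.exists_of_iUnion hδ.ne'
    (by rw [Cardinal.mk_Iio_ordinal, card_ord]; exact lift_lt.2 hθ)
  obtain ⟨x, hx, hfib⟩ := hUi.exists_isStationaryIn_fiber hδ he fun α hα => hξ α hα.1 i hi
  obtain ⟨α, ⟨⟨-, hbα⟩, rfl⟩⟩ := hfib.nonempty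
  exact ⟨i, hi, _, hx, hbα, hfib.mono fun β hβ => ⟨hβ.1.1, hβ.2⟩⟩

theorem exists_lift_le_mk_of_cofinal {δ : Ordinal.{0}} {θ ν : Cardinal.{0}} (hν : ℵ₀ ≤ ν)
    (hθν : θ ≤ ν) (hνδ : ν < δ.cof) {R : Ordinal.{0} → Set Ordinal.{0}}
    (hRδ : ∀ i < θ.ord, R i ⊆ Iio δ) (hR : ∀ b < δ, ∃ i < θ.ord, ∃ x ∈ R i, b < x) :
    ∃ i < θ.ord, lift.{1} ν ≤ #(R i) := by
  by_contra! h
  set B := ⋃ i ∈ Iio θ.ord, R i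
  have hBδ : B ⊆ Iio δ := iUnion₂_subset hRδ
  have hB : #B ≤ lift.{1} ν := calc
    #B ≤ #(Iio θ.ord) * ⨆ i : Iio θ.ord, #(R i) := mk_biUnion_le R _
    _ ≤ lift.{1} θ * lift.{1} ν := by
      rw [Cardinal.mk_Iio_ordinal, card_ord]
      exact mul_le_mul_right (ciSup_le' fun i : Iio θ.ord => (h i.1 i.2).le) _
    _ ≤ lift.{1} ν := by
      rw [← lift_mul, lift_le]
      exact (mul_le_mul_left hθν ν).trans (mul_eq_self hν).le
  have hsup : sSup B < δ :=
    Ordinal.sSup_lt_of_lt_cof (by rw [← Ordinal.lift_cof]; exact hB.trans_lt (lift_lt.2 hνδ)) hBδ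
  obtain ⟨i, hi, x, hx, hBx⟩ := hR _ hsup
  exact (le_csSup ⟨δ, fun y hy => (hBδ hy).le⟩ (mem_biUnion hi hx)).not_gt hBx

theorem exists_many_stationary_levels {θ₁ θ : Cardinal.{0}} (hθ₁ : ℵ₀ ≤ θ₁) (hθ₁θ : θ ≤ θ₁)
    {δ : Ordinal.{0}} (hδ : δ.cof = Order.succ θ₁) {S' : Set Ordinal.{0}}
    {e : Ordinal.{0} → Set Ordinal.{0}} (he : IsClubIn (e δ) δ)
    (he_otp : otp (e δ) ≤ (Order.succ θ₁).ord) (he_coh : ∀ x ∈ e δ, e x = e δ ∩ Iio x)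
    (hT : IsStationaryIn (S' ∩ e δ) δ) {ξ : Ordinal.{0} → Ordinal.{0} → Ordinal.{0}}
    (hξmem : ∀ α ∈ S' ∩ e δ, ∀ i < θ.ord, ξ α i ∈ e α)
    (hξsup : ∀ α ∈ S' ∩ e δ, sSup (ξ α '' Iio θ.ord) = α) :
    ∃ βs < (Order.succ θ₁).ord, ∃ is < θ.ord, ∀ E, e δ ⊆ E →
      lift.{1} θ₁ ≤ #{ζ : Ordinal | ζ ≤ βs ∧
        IsStationaryIn (E ∩ Iio δ ∩ {α | α ∈ S' ∧ min (otp (e (ξ α is))) βs = ζ}) δ} := by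
  set T := S' ∩ e δ
  have hδ₀ : ℵ₀ < δ.cof := hδ ▸ hθ₁.trans_lt (Order.lt_succ θ₁)
  have : Small.{0} (e δ) := small_subset he.1
  have he_small : ∀ β < δ, #(e δ ∩ Iio β : Set Ordinal.{0}) < lift.{1} δ.cof := by
    intro β hβ
    obtain ⟨γ, hγ, hβγ⟩ := he.2.1 β hβ
    rw [hδ]
    exact (mk_le_mk_of_subset (inter_subset_inter_right _ (Iio_subset_Iio hβγ))).trans_lt
      (mk_inter_Iio_lt he_otp hγ)
  have hTξ : ∀ α ∈ T, ∀ i < θ.ord, ξ α i ∈ e δ ∧ ξ α i < α := fun α hα i hi => by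
    simpa [he_coh α hα.2] using hξmem α hα i hi
  have hξ_cofinal : ∀ α ∈ T, ∀ b < α, ∃ i < θ.ord, b < ξ α i := fun α hα b hb => by
    obtain ⟨_, ⟨i, hi, rfl⟩, hbi⟩ := exists_lt_of_lt_csSup' ((hξsup α hα).symm ▸ hb)
    exact ⟨i, hi, hbi⟩
  obtain ⟨i, hi, hRi⟩ := exists_lift_le_mk_of_cofinal (δ := δ) hθ₁ hθ₁θ (hδ ▸ Order.lt_succ θ₁)
    (R := fun i => {x ∈ e δ | IsStationaryIn {α ∈ T | ξ α i = x} δ})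
    (fun _ _ x hx => he.1 hx.1) fun b hb => by
      obtain ⟨i, hi, x, hx, hbx, hfib⟩ := exists_isStationaryIn_fiber_gt hδ₀
        (hδ ▸ hθ₁θ.trans_lt (Order.lt_succ θ₁)) he_small hT hTξ hξ_cofinal hb
      exact ⟨i, hi, x, ⟨hx, hfib⟩, hbx⟩
  obtain ⟨p, hpR, hp⟩ := le_mk_iff_exists_subset.1 hRi
  -- by coherence, `φ x` is the height `otp (e x)` of `x ∈ e δ`
  set φ := fun x => otp (e δ ∩ Iio x)
  have hφp : #(φ '' p) = lift.{1} θ₁ :=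
    (mk_image_eq_of_injOn _ _ (injOn_otp_inter_Iio.mono fun x hx => (hpR hx).1)).trans hp
  have hφ : ∀ ζ ∈ φ '' p, ζ < (Order.succ θ₁).ord := by
    rintro _ ⟨x, hx, rfl⟩
    exact (otp_inter_Iio_lt (hpR hx).1).trans_le he_otp
  have hbdd : BddAbove (φ '' p) := ⟨_, fun ζ hζ => (hφ ζ hζ).le⟩
  refine ⟨sSup (φ '' p), Ordinal.sSup_lt_of_lt_cof ?_ hφ, i, hi, fun E hE => ?_⟩
  · rw [← Ordinal.lift_cof, (isRegular_succ hθ₁).cof_ord, hφp]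
    exact lift_lt.2 (Order.lt_succ θ₁)
  rw [← hφp]
  refine mk_le_mk_of_subset ?_
  rintro _ ⟨x, hx, rfl⟩
  have hxβs : φ x ≤ sSup (φ '' p) := le_csSup hbdd (mem_image_of_mem φ hx)
  refine ⟨hxβs, (hpR hx).2.mono ?_⟩
  rintro α ⟨hαT, rfl⟩
  refine ⟨⟨hE hαT.2, he.1 hαT.2⟩, hαT.1, ?_⟩
  rw [he_coh _ (hTξ α hαT i hi).1]
  exact min_eq_left hxβs

theorem exists_forall_isStationaryIn_of_forall_isClubIn {Λ : Ordinal.{0}} (hΛ : Λ.cof ≠ ℵ₀)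
    {ι : Type 1} [Nonempty ι] (hι : #ι < lift.{1} Λ.cof)
    {P : ι → Set Ordinal.{0} → Set Ordinal.{0}}
    (hP : ∀ E, IsClubIn E Λ → ∃ i, ∃ δ ∈ E, ∀ E', E ⊆ E' → δ ∈ P i E') :
    ∃ i, ∀ E, IsClubIn E Λ → IsStationaryIn (P i E) Λ := by
  by_contra! h
  choose E hE hns using h
  choose F hF hdisj using fun i => not_isStationaryIn_iff.1 (hns i)
  obtain ⟨i, δ, hδ, hδP⟩ := hP _ (IsClubIn.iInter hΛ hι fun i => .inter hΛ (hE i) (hF i))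
  exact (eq_empty_iff_forall_notMem.1 (hdisj i)) δ
    ⟨hδP _ ((iInter_subset _ i).trans inter_subset_left), (mem_iInter.1 hδ i).2⟩

theorem stmt_3_general
    (lam θ₁ θ : Cardinal.{0})
    (hlamθ₁ : Order.succ θ₁ < lam) (hθ₁θ : θ ≤ θ₁)
    (hθ : Cardinal.aleph 1 < θ)
    (Sstar S₁ S₂ S' : Set Ordinal) (e : Ordinal → Set Ordinal)
    (hS₁def : S₁ = {δ | δ < (Order.succ lam).ord ∧ δ.cof = Order.succ θ₁ ∧
      IsStationaryIn (Sstar ∩ Set.Iio δ) δ})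
    (he_closed : ∀ δ ∈ S₂, e δ ⊆ Set.Iio δ ∧ IsClosedIn (e δ) δ ∧
      otp (e δ) ≤ (Order.succ θ₁).ord)
    (he_coh : ∀ δ ∈ S₂, ∀ β ∈ e δ, β ∈ S₂ ∧ e β = e δ ∩ Set.Iio β)
    (he_sup : ∀ δ ∈ S₂, δ.cof ≠ Cardinal.aleph 1 → sSup (e δ) = δ)
    (hguess : ∀ E, IsClubIn E (Order.succ lam).ord →
      IsStationaryIn {δ | δ ∈ S₁ ∩ S₂ ∧ e δ ⊆ E} (Order.succ lam).ord)
    (hS'def : S' = Sstar ∩ S₂)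
    (ξ : Ordinal → Ordinal → Ordinal)
    (hξsup : ∀ δ ∈ S', sSup (ξ δ '' Set.Iio θ.ord) = δ)
    (hξmem : ∀ δ ∈ S', ∀ i < θ.ord, ξ δ i ∈ e δ) :
    ∃ βs < (Order.succ θ₁).ord, ∃ is < θ.ord,
      ∀ E, IsClubIn E (Order.succ lam).ord →
        IsStationaryIn {δ | δ ∈ S₁ ∩ S₂ ∧ e δ ⊆ E ∧
          Cardinal.lift.{1} θ₁ ≤ Cardinal.mk
            {ζ : Ordinal | ζ ≤ βs ∧
              IsStationaryIn
                (E ∩ Set.Iio δ ∩ {α | α ∈ S' ∧ min (otp (e (ξ α is))) βs = ζ}) δ}}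
          (Order.succ lam).ord := by
  have hθpos : 0 < θ := (aleph_pos 1).trans hθ
  have hθ₁ : ℵ₀ ≤ θ₁ := (aleph0_lt_aleph_one.trans hθ).le.trans hθ₁θ
  have hμ : Order.succ θ₁ < Order.succ lam := hlamθ₁.trans (Order.lt_succ lam)
  have hΛ : (Order.succ lam).ord.cof = Order.succ lam :=
    (isRegular_succ (hθ₁.trans ((Order.lt_succ θ₁).trans hlamθ₁).le)).cof_ord
  have : Nonempty (Iio (Order.succ θ₁).ord × Iio θ.ord) :=
    ⟨⟨0, ord_pos.2 (hθpos.trans_le (hθ₁θ.trans (Order.le_succ θ₁)))⟩, ⟨0, ord_pos.2 hθpos⟩⟩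
  have hι : #(Iio (Order.succ θ₁).ord × Iio θ.ord) < lift.{1} (Order.succ lam).ord.cof := by
    rw [hΛ]
    exact mk_Iio_ord_prod_lt (hθ₁.trans (Order.le_succ θ₁)) (hθ₁θ.trans (Order.le_succ θ₁)) hμ
  refine (exists_forall_isStationaryIn_of_forall_isClubIn
    (hΛ.symm ▸ (hθ₁.trans_lt ((Order.lt_succ θ₁).trans hμ)).ne') hι
    (P := fun j E => {δ | δ ∈ S₁ ∩ S₂ ∧ e δ ⊆ E ∧ lift.{1} θ₁ ≤ #{ζ : Ordinal | ζ ≤ j.1.1 ∧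
      IsStationaryIn (E ∩ Iio δ ∩ {α | α ∈ S' ∧ min (otp (e (ξ α j.2.1))) j.1.1 = ζ}) δ}})
    ?_).elim fun ⟨⟨βs, hβs⟩, is, his⟩ h => ⟨βs, hβs, is, his, h⟩
  intro E hE
  obtain ⟨δ, ⟨hδ, heE⟩, hδE⟩ := hguess E hE E hE
  obtain ⟨-, hδcof, hδstat⟩ := hS₁def ▸ hδ.1
  obtain ⟨hesub, hecl, heotp⟩ := he_closed δ hδ.2
  have he : IsClubIn (e δ) δ := isClubIn_of_csSup_eq hesub hecl
    (he_sup δ hδ.2 (hδcof ▸ (hθ.trans_le hθ₁θ |>.trans (Order.lt_succ θ₁)).ne'))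
  have hT : IsStationaryIn (S' ∩ e δ) δ :=
    (hδstat.inter_isClubIn (hδcof ▸ (hθ₁.trans_lt (Order.lt_succ θ₁)).ne') he).mono
      fun α ⟨⟨hα, _⟩, hαe⟩ => ⟨hS'def ▸ ⟨hα, (he_coh δ hδ.2 α hαe).1⟩, hαe⟩
  obtain ⟨βs, hβs, is, his, hmany⟩ := exists_many_stationary_levels hθ₁ hθ₁θ hδcof he heotp
    (fun x hx => (he_coh δ hδ.2 x hx).2) hT (fun α hα => hξmem α hα.1) (fun α hα => hξsup α hα.1)
  exact ⟨⟨⟨βs, hβs⟩, is, his⟩, δ, hδE, fun E' hEE' =>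
    ⟨hδ, heE.trans hEE', hmany _ (heE.trans hEE')⟩⟩

/-- Subclaim 1.3. -/
theorem stmt_3
    (lam θ₁ θ : Cardinal.{0})
    (hlamreg : lam.IsRegular) (hlamθ₁ : Order.succ θ₁ < lam) (hθ₁θ : θ ≤ θ₁)
    (hθreg : θ.IsRegular) (hθ : Cardinal.aleph 1 < θ)
    (Sstar S₁ S₂ S' : Set Ordinal) (e : Ordinal → Set Ordinal)
    (hSsub : Sstar ⊆ cofSet θ (Order.succ lam).ord)
    (hSstat : IsStationaryIn Sstar (Order.succ lam).ord)
    (hS₁def : S₁ = {δ | δ < (Order.succ lam).ord ∧ δ.cof = Order.succ θ₁ ∧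
      IsStationaryIn (Sstar ∩ Set.Iio δ) δ})
    (hS₁stat : IsStationaryIn S₁ (Order.succ lam).ord)
    (hS₂ : ∀ δ ∈ S₂, δ < (Order.succ lam).ord ∧ Order.IsSuccLimit δ ∧ δ.cof ≤ Order.succ θ₁)
    (he_closed : ∀ δ ∈ S₂, e δ ⊆ Set.Iio δ ∧ IsClosedIn (e δ) δ ∧
      otp (e δ) ≤ (Order.succ θ₁).ord)
    (he_coh : ∀ δ ∈ S₂, ∀ β ∈ e δ, β ∈ S₂ ∧ e β = e δ ∩ Set.Iio β)
    (he_sup : ∀ δ ∈ S₂, δ.cof ≠ Cardinal.aleph 1 → sSup (e δ) = δ)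
    (hS₁S₂stat : IsStationaryIn (S₁ ∩ S₂) (Order.succ lam).ord)
    (hguess : ∀ E, IsClubIn E (Order.succ lam).ord →
      IsStationaryIn {δ | δ ∈ S₁ ∩ S₂ ∧ e δ ⊆ E} (Order.succ lam).ord)
    (hS'def : S' = Sstar ∩ S₂)
    (ξ : Ordinal → Ordinal → Ordinal)
    (hξmono : ∀ δ ∈ S', ∀ i j : Ordinal, i < j → j < θ.ord → ξ δ i < ξ δ j)
    (hξsup : ∀ δ ∈ S', sSup (ξ δ '' Set.Iio θ.ord) = δ)
    (hξmem : ∀ δ ∈ S', ∀ i < θ.ord, ξ δ i ∈ e δ)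
    (hξdep : ∀ δ ∈ S', ∀ δ' ∈ S', ∀ i < θ.ord,
      otp (e δ) = otp (e δ') → otp (e (ξ δ i)) = otp (e (ξ δ' i))) :
    ∃ βs < (Order.succ θ₁).ord, ∃ is < θ.ord,
      ∀ E, IsClubIn E (Order.succ lam).ord →
        IsStationaryIn {δ | δ ∈ S₁ ∩ S₂ ∧ e δ ⊆ E ∧
          Cardinal.lift.{1} θ₁ ≤ Cardinal.mk
            {ζ : Ordinal | ζ ≤ βs ∧
              IsStationaryIn
                (E ∩ Set.Iio δ ∩ {α | α ∈ S' ∧ min (otp (e (ξ α is))) βs = ζ}) δ}}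
          (Order.succ lam).ord :=
  stmt_3_general lam θ₁ θ hlamθ₁ hθ₁θ hθ Sstar S₁ S₂ S' e hS₁def he_closed he_coh he_sup hguess
    hS'def ξ hξsup hξmem
end
end

section
/- Let δ be a limit ordinal, e a club of δ, S ⊆ nacc(e) a set of limit ordinals, and for each α ∈ S let D_α be a club of α. Let E = e ∪ ⋃_{α ∈ S} {β ∈ D_α : β ≥ sup(e ∩ α)}. Then E is a club of δ. Moreover, if γ is an ordinal with otp(e) ≤ γ and ρ is an additively indecomposable limit ordinal such that otp(D_α) < ρ for every α ∈ S, then otp(E) ≤ ρ · γ (ordinal multiplication, γ copies of ρ). -/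
/-!
A point of `E` outside `e` lies in `D α` above `sup (e ∩ α)` for a unique `α ∈ S`, namely its
ceiling in `e` (the least element of `e` above it); so `E` is `e` with a block of `D α` inserted just below each
`α ∈ S`, the blocks ordered as their ceilings.

Closedness: let `σ ∉ e` be a limit of `E` and `α` its ceiling in `e`. Either `σ = sup (e ∩ α)`,
and `σ ∈ e` by closedness of `e`, or the points of `E` cofinal in `σ` all lie in the block of `α`,
and `σ ∈ D α` by closedness of `D α`.

Order type: `y ↦ ρ · (index of its ceiling in e) + (index of y in D of that ceiling)` is
strictly increasing from `E` into `ρ · otp e`, since every block has order type `< ρ`.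
-/

noncomputable section

open Set Ordinal

def shrinkLT (C : Set Ordinal.{0}) [Small.{0} C] : Shrink C → Shrink C → Prop :=
  fun x y => ((equivShrink C).symm x : Ordinal) < ((equivShrink C).symm y : Ordinal)

instance (C : Set Ordinal.{0}) [Small.{0} C] : IsWellOrder (Shrink C) (shrinkLT C) :=
  RelEmbedding.isWellOrder
    (⟨⟨fun x => ((equivShrink C).symm x : Ordinal),
        fun _ _ hab => (equivShrink C).symm.injective (Subtype.coe_injective hab)⟩,
      Iff.rfl⟩ : shrinkLT C ↪r ((· < ·) : Ordinal → Ordinal → Prop))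

lemma otp_eq_type (C : Set Ordinal.{0}) [h : Small.{0} C] : otp C = type (shrinkLT C) := by
  rw [otp, dif_pos h]
  rfl

def indexIn (C : Set Ordinal.{0}) [Small.{0} C] (x : C) : Ordinal :=
  typein (shrinkLT C) (equivShrink C x)

lemma indexIn_lt_otp (C : Set Ordinal.{0}) [Small.{0} C] (x : C) : indexIn C x < otp C := by
  rw [otp_eq_type]
  exact typein_lt_type _ _

lemma indexIn_strictMono (C : Set Ordinal.{0}) [Small.{0} C] : StrictMono (indexIn C) := by
  intro x y h
  rw [indexIn, indexIn, typein_lt_typein]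
  simpa [shrinkLT] using h

lemma otp_le_of_strictMono {C : Set Ordinal.{0}} {b : Ordinal} (f : C → Ordinal)
    (hf : StrictMono f) (hb : ∀ x, f x < b) : otp C ≤ b := by
  by_cases hC : Small.{0} C
  · rw [otp_eq_type]
    let emb : shrinkLT C ↪r ((· < ·) : b.ToType → b.ToType → Prop) :=
      RelEmbedding.ofMonotone (fun x => ToType.mk ⟨f ((equivShrink C).symm x), hb _⟩)
        fun _ _ hxy => ToType.mk.lt_iff_lt.2 (hf hxy)
    simpa using emb.ordinal_type_le
  · simp [otp, hC]

lemma otp_mono {C C' : Set Ordinal.{0}} [Small.{0} C'] (h : C ⊆ C') : otp C ≤ otp C' :=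
  otp_le_of_strictMono (fun x => indexIn C' (inclusion h x))
    (fun _ _ hxy => indexIn_strictMono C' hxy) fun _ => indexIn_lt_otp _ _

lemma otp_inter_Iio_lt_otp_inter_Iio {C : Set Ordinal.{0}} {x y : Ordinal} (hx : x ∈ C)
    (hxy : x < y) : otp (C ∩ Iio x) < otp (C ∩ Iio y) := by
  have : Small.{0} ↥(C ∩ Iio y) := small_subset inter_subset_right
  have hsub : C ∩ Iio x ⊆ C ∩ Iio y := inter_subset_inter_right _ (Iio_subset_Iio hxy.le)
  calc otp (C ∩ Iio x) ≤ indexIn (C ∩ Iio y) ⟨x, hx, hxy⟩ :=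
        otp_le_of_strictMono (fun z => indexIn _ (inclusion hsub z))
          (fun _ _ hzw => indexIn_strictMono _ hzw) fun z => indexIn_strictMono _ z.2.2
    _ < otp (C ∩ Iio y) := indexIn_lt_otp _ _

lemma Ordinal.mul_add_lt_mul {ρ i j c : Ordinal} (hc : c < ρ) (hij : i < j) :
    ρ * i + c < ρ * j :=
  calc ρ * i + c < ρ * i + ρ := add_lt_add_right hc _
    _ = ρ * Order.succ i := (mul_succ ρ i).symm
    _ ≤ ρ * j := mul_le_mul_right (Order.succ_le_of_lt hij) ρ

/-- `x ↦ ρ * indexIn A (g x) + h x` embeds `C` into `ρ * otp A`. -/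
lemma otp_le_mul_of_lex {C A : Set Ordinal.{0}} [Small.{0} A] {ρ : Ordinal}
    {g h : Ordinal → Ordinal} (hg : ∀ x ∈ C, g x ∈ A) (hh : ∀ x ∈ C, h x < ρ)
    (hlex : ∀ x ∈ C, ∀ y ∈ C, x < y → g x < g y ∨ g x = g y ∧ h x < h y) :
    otp C ≤ ρ * otp A := by
  refine otp_le_of_strictMono (fun x => ρ * indexIn A ⟨g x, hg x x.2⟩ + h x) (fun x y hxy => ?_)
    fun x => mul_add_lt_mul (hh x x.2) (indexIn_lt_otp _ _)
  rcases hlex x x.2 y y.2 hxy with hgxy | ⟨hgxy, hhxy⟩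
  · exact (mul_add_lt_mul (hh x x.2) (indexIn_strictMono A hgxy)).trans_le le_self_add
  · have : (⟨g x, hg x x.2⟩ : A) = ⟨g y, hg y y.2⟩ := Subtype.ext hgxy
    simp only [this]
    exact add_lt_add_right hhxy _

lemma csSup_inter_Ioi_eq {α : Type*} [ConditionallyCompleteLinearOrder α] {s : Set α} {t : α}
    (hs : BddAbove s) (hne : s.Nonempty) (ht : t < sSup s) : sSup (s ∩ Ioi t) = sSup s := by
  obtain ⟨y, hy, hty⟩ := (lt_csSup_iff hs hne).1 ht
  refine le_antisymm (csSup_le_csSup hs ⟨y, hy, hty⟩ inter_subset_left) (le_of_forall_lt ?_)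
  intro c hc
  obtain ⟨z, hz, hcz⟩ := (lt_csSup_iff hs hne).1 (max_lt hc ht)
  exact (le_max_left c t).trans_lt hcz |>.trans_le
    (le_csSup (hs.mono inter_subset_left) ⟨hz, (le_max_right c t).trans_lt hcz⟩)

lemma IsClosedIn.of_sSup_inter_Iio {C : Set Ordinal.{0}} {δ : Ordinal} (hC : C ⊆ Iio δ)
    (h : ∀ σ < δ, (C ∩ Iio σ).Nonempty → sSup (C ∩ Iio σ) = σ → σ ∈ C) : IsClosedIn C δ := by
  intro s hs hne hσ
  by_cases hmem : sSup s ∈ s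
  · exact hs hmem
  have hbdd : BddAbove s := bddAbove_Iio.mono (hs.trans hC)
  have hsub : s ⊆ C ∩ Iio (sSup s) := fun y hy =>
    ⟨hs hy, (le_csSup hbdd hy).lt_of_ne (ne_of_mem_of_not_mem hy hmem)⟩
  exact h _ hσ (hne.mono hsub) (le_antisymm (csSup_le' fun y hy => hy.2.le)
    (csSup_le_csSup (bddAbove_Iio.mono inter_subset_right) hne hsub))

lemma le_sSup_inter_Iio {e : Set Ordinal.{0}} {α β : Ordinal} (hβ : β ∈ e) (h : β < α) :
    β ≤ sSup (e ∩ Iio α) :=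
  le_csSup (bddAbove_Iio.mono inter_subset_right) ⟨hβ, h⟩

/-- The least element of `e` above `y` (junk value `0` if there is none). -/
def ceilIn (e : Set Ordinal.{0}) (y : Ordinal) : Ordinal := sInf {β ∈ e | y ≤ β}

section ceilIn

variable {e : Set Ordinal.{0}} {y α β : Ordinal}

lemma ceilIn_le (hβ : β ∈ e) (h : y ≤ β) : ceilIn e y ≤ β := csInf_le' (mem_sep hβ h)

lemma ceilIn_mem (hβ : β ∈ e) (h : y ≤ β) : ceilIn e y ∈ e ∧ y ≤ ceilIn e y :=
  csInf_mem ⟨β, mem_sep hβ h⟩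

lemma ceilIn_eq_self (hy : y ∈ e) : ceilIn e y = y :=
  le_antisymm (ceilIn_le hy le_rfl) (ceilIn_mem hy le_rfl).2

lemma lt_of_lt_ceilIn (hβ : β ∈ e) (h : β < ceilIn e y) : β < y :=
  lt_of_not_ge fun h' => (ceilIn_le hβ h').not_gt h

lemma ceilIn_eq_of_sSup_inter_Iio_le (hy : y ∉ e) (hα : α ∈ e) (hyα : y < α)
    (h : sSup (e ∩ Iio α) ≤ y) : ceilIn e y = α := by
  obtain ⟨hce, hyc⟩ := ceilIn_mem hα hyα.le
  refine le_antisymm (ceilIn_le hα hyα.le) (not_lt.1 fun hcα => hy ?_)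
  rwa [le_antisymm ((le_sSup_inter_Iio hce hcα).trans h) hyc] at hce

end ceilIn

def glue (e S : Set Ordinal.{0}) (D : Ordinal.{0} → Set Ordinal.{0}) : Set Ordinal.{0} :=
  e ∪ ⋃ α ∈ S, {β ∈ D α | sSup (e ∩ Iio α) ≤ β}

section glue

variable {e S : Set Ordinal.{0}} {D : Ordinal.{0} → Set Ordinal.{0}} {y : Ordinal}

lemma mem_glue : y ∈ glue e S D ↔ y ∈ e ∨ ∃ α ∈ S, y ∈ D α ∧ sSup (e ∩ Iio α) ≤ y := by
  simp only [glue, mem_union, mem_iUnion, mem_ofPred_eq, exists_prop]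

lemma ceilIn_mem_of_mem_glue (hSe : S ⊆ e) (hD : ∀ α ∈ S, D α ⊆ Iio α)
    (hy : y ∈ glue e S D) (hye : y ∉ e) : ceilIn e y ∈ S ∧ y ∈ D (ceilIn e y) := by
  obtain ⟨α, hα, hyD, hαy⟩ := (mem_glue.1 hy).resolve_left hye
  rw [ceilIn_eq_of_sSup_inter_Iio_le hye (hSe hα) (hD α hα hyD) hαy]
  exact ⟨hα, hyD⟩

lemma exists_mem_le_of_mem_glue (hSe : S ⊆ e) (hD : ∀ α ∈ S, D α ⊆ Iio α)
    (hy : y ∈ glue e S D) : ∃ β ∈ e, y ≤ β := by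
  by_cases hye : y ∈ e
  · exact ⟨y, hye, le_rfl⟩
  obtain ⟨hS, hyD⟩ := ceilIn_mem_of_mem_glue hSe hD hy hye
  exact ⟨_, hSe hS, (hD _ hS hyD).le⟩

lemma mem_of_mem_glue_of_sSup_inter_Iio_lt (hSe : S ⊆ e) (hD : ∀ α ∈ S, D α ⊆ Iio α)
    {α : Ordinal} (hα : α ∈ e) (hy : y ∈ glue e S D) (hty : sSup (e ∩ Iio α) < y)
    (hyα : y < α) : α ∈ S ∧ y ∈ D α := by
  have hye : y ∉ e := fun hye => (le_sSup_inter_Iio hye hyα).not_gt hty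
  obtain ⟨hcS, hcD⟩ := ceilIn_mem_of_mem_glue hSe hD hy hye
  suffices ceilIn e y = α from this ▸ ⟨hcS, hcD⟩
  refine le_antisymm (ceilIn_le hα hyα.le) (not_lt.1 fun hcα => ?_)
  exact lt_asymm ((le_sSup_inter_Iio (hSe hcS) hcα).trans_lt hty) (hD _ hcS hcD)

lemma glue_subset_Iio {δ : Ordinal} (he : e ⊆ Iio δ) (hSe : S ⊆ e)
    (hD : ∀ α ∈ S, D α ⊆ Iio α) : glue e S D ⊆ Iio δ := fun _ hy =>
  have ⟨_, hβ, hyβ⟩ := exists_mem_le_of_mem_glue hSe hD hy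
  hyβ.trans_lt (he hβ)

lemma isClosedIn_glue {δ : Ordinal} (he : IsClubIn e δ) (hSe : S ⊆ e)
    (hD : ∀ α ∈ S, IsClubIn (D α) α) : IsClosedIn (glue e S D) δ := by
  have hDlt : ∀ α ∈ S, D α ⊆ Iio α := fun α hα => (hD α hα).1
  refine .of_sSup_inter_Iio (glue_subset_Iio he.1 hSe hDlt) fun σ hσδ hne hsup => ?_
  by_cases hσe : σ ∈ e
  · exact mem_glue.2 (Or.inl hσe)
  obtain ⟨β, hβ, hσβ⟩ := he.2.1 σ hσδ
  obtain ⟨hαe, hσα⟩ := ceilIn_mem hβ hσβ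
  set α := ceilIn e σ
  replace hσα : σ < α := hσα.lt_of_ne fun h => hσe (h ▸ hαe)
  have htσ : sSup (e ∩ Iio α) ≤ σ := csSup_le' fun z hz => (lt_of_lt_ceilIn hz.1 hz.2).le
  obtain htσ | htσ := htσ.lt_or_eq
  · set s := glue e S D ∩ Iio σ ∩ Ioi (sSup (e ∩ Iio α))
    have hs : ∀ y ∈ s, α ∈ S ∧ y ∈ D α := fun y ⟨⟨hy, hyσ⟩, hty⟩ =>
      mem_of_mem_glue_of_sSup_inter_Iio_lt hSe hDlt hαe hy hty (hyσ.trans hσα)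
    have hbdd : BddAbove (glue e S D ∩ Iio σ) := bddAbove_Iio.mono inter_subset_right
    obtain ⟨y, hy, hty⟩ := (lt_csSup_iff hbdd hne).1 (htσ.trans_eq hsup.symm)
    have hsσ : sSup s = σ := (csSup_inter_Ioi_eq hbdd hne (htσ.trans_eq hsup.symm)).trans hsup
    have hαS := (hs y ⟨hy, hty⟩).1
    have hσD : σ ∈ D α :=
      hsσ ▸ (hD α hαS).2.2 s (fun z hz => (hs z hz).2) ⟨y, hy, hty⟩ (hsσ ▸ hσα)
    exact mem_glue.2 (Or.inr ⟨α, hαS, hσD, htσ.le⟩)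
  · have hne' : (e ∩ Iio α).Nonempty := by
      obtain ⟨z, -, hz⟩ := hne
      refine nonempty_iff_ne_empty.2 fun h => not_lt_bot (a := z) ?_
      rwa [← htσ, h, csSup_empty] at hz
    exact absurd (htσ ▸ he.2.2 _ inter_subset_left hne' (htσ ▸ hσδ)) hσe

lemma isClubIn_glue {δ : Ordinal} (he : IsClubIn e δ) (hSe : S ⊆ e)
    (hD : ∀ α ∈ S, IsClubIn (D α) α) : IsClubIn (glue e S D) δ :=
  ⟨glue_subset_Iio he.1 hSe fun α hα => (hD α hα).1,
    fun β hβ => (he.2.1 β hβ).imp fun _ ⟨hγ, hβγ⟩ => ⟨mem_glue.2 (Or.inl hγ), hβγ⟩,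
    isClosedIn_glue he hSe hD⟩

/-- Each point is sent to its ceiling in `e`, refined by its position in `D` of that ceiling;
the point `α ∈ S` itself gets position `otp (D α)`, after all of `D α`. -/
lemma otp_glue_le [Small.{0} e] {ρ : Ordinal} (hSe : S ⊆ e) (hD : ∀ α ∈ S, D α ⊆ Iio α)
    (hρ : 0 < ρ) (hDρ : ∀ α ∈ S, otp (D α) < ρ) : otp (glue e S D) ≤ ρ * otp e := by
  classical
  refine otp_le_mul_of_lex (g := ceilIn e)
    (h := fun y => if ceilIn e y ∈ S then otp (D (ceilIn e y) ∩ Iio y) else 0) ?_ ?_ ?_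
  · intro y hy
    obtain ⟨β, hβ, hyβ⟩ := exists_mem_le_of_mem_glue hSe hD hy
    exact (ceilIn_mem hβ hyβ).1
  · intro y _
    split_ifs with hS
    · have : Small.{0} (D (ceilIn e y)) := small_subset (hD _ hS)
      exact (otp_mono inter_subset_left).trans_lt (hDρ _ hS)
    · exact hρ
  · intro x hx y hy hxy
    obtain ⟨β, hβ, hyβ⟩ := exists_mem_le_of_mem_glue hSe hD hy
    obtain ⟨hce, hyc⟩ := ceilIn_mem hβ hyβ
    refine (ceilIn_le hce (hxy.le.trans hyc)).lt_or_eq.imp_right fun heq => ⟨heq, ?_⟩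
    have hxe : x ∉ e := fun hxe => hxy.not_ge (by rwa [← heq, ceilIn_eq_self hxe] at hyc)
    obtain ⟨hS, hxD⟩ := ceilIn_mem_of_mem_glue hSe hD hx hxe
    rw [heq] at hS hxD
    simp only [heq, if_pos hS]
    exact otp_inter_Iio_lt_otp_inter_Iio hxD hxy

end glue

theorem stmt_10_general (δ : Ordinal)
    (e : Set Ordinal) (he : IsClubIn e δ)
    (S : Set Ordinal) (hSe : S ⊆ naccSet e)
    (D : Ordinal → Set Ordinal) (hD : ∀ α ∈ S, IsClubIn (D α) α)
    (E : Set Ordinal)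
    (hE : E = e ∪ ⋃ α ∈ S, {β ∈ D α | sSup (e ∩ Set.Iio α) ≤ β}) :
    IsClubIn E δ ∧
      ∀ γ ρ : Ordinal, otp e ≤ γ → Order.IsSuccLimit ρ →
        (∀ a < ρ, ∀ b < ρ, a + b < ρ) → (∀ α ∈ S, otp (D α) < ρ) →
        otp E ≤ ρ * γ := by
  change E = glue e S D at hE
  subst hE
  have hSe' : S ⊆ e := fun α hα => (hSe hα).1
  refine ⟨isClubIn_glue he hSe' hD, fun γ ρ hγ hρ _ hDρ => ?_⟩
  have : Small.{0} e := small_subset he.1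
  exact (otp_glue_le hSe' (fun α hα => (hD α hα).1) hρ.bot_lt hDρ).trans
    (mul_le_mul_right hγ ρ)

/-- Gluing clubs of nonaccumulation points onto a club: the result is a club,
with the corresponding order-type bound. -/
theorem stmt_10 (δ : Ordinal) (hδ : Order.IsSuccLimit δ)
    (e : Set Ordinal) (he : IsClubIn e δ)
    (S : Set Ordinal) (hSe : S ⊆ naccSet e) (hSlim : ∀ α ∈ S, Order.IsSuccLimit α)
    (D : Ordinal → Set Ordinal) (hD : ∀ α ∈ S, IsClubIn (D α) α)
    (E : Set Ordinal)
    (hE : E = e ∪ ⋃ α ∈ S, {β ∈ D α | sSup (e ∩ Set.Iio α) ≤ β}) :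
    IsClubIn E δ ∧
      ∀ γ ρ : Ordinal, otp e ≤ γ → Order.IsSuccLimit ρ →
        (∀ a < ρ, ∀ b < ρ, a + b < ρ) → (∀ α ∈ S, otp (D α) < ρ) →
        otp E ≤ ρ * γ :=
  stmt_10_general δ e he S hSe D hD E hE
end
end
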